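/- For k = 1, …, n let G_k and H_k be unit-rate exponential random variables, all 2n of them mutually independent, and let a_k, b_k > 0. Then for every θ > 0, P[min(∑_{k=1}^n a_k G_k, ∑_{k=1}^n b_k H_k) < θ] ≤ θ^n · (∏_{k=1}^n a_k^{-1} + ∏_{k=1}^n b_k^{-1}). -/

import Mathlib

/-! Since the `G_k` are almost surely positive, `∑_k a_k G_k < θ` forces `G_k < θ / a_k` for
every `k`; by independence this has probability `∏_k P[G_k < θ / a_k] ≤ ∏_k θ / a_k`, because
`1 - e^{-x} ≤ x`. A union bound over the two hops finishes the proof. -/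

open MeasureTheory ProbabilityTheory

/-- A real random variable `g` is unit-rate exponential (w.r.t. measure `ℙ`) if
`ℙ[g > x] = e^{-x}` for all `x ≥ 0`. -/
def IsUnitExp {Ω : Type*} [MeasureSpace Ω] (g : Ω → ℝ) : Prop :=
  ∀ x : ℝ, 0 ≤ x → ℙ {ω | x < g ω} = ENNReal.ofReal (Real.exp (-x))

namespace IsUnitExp

variable {Ω : Type*} [MeasureSpace Ω] [IsProbabilityMeasure (ℙ : Measure Ω)] {g : Ω → ℝ}

theorem ae_pos (hmeas : Measurable g) (hg : IsUnitExp g) : ∀ᵐ ω, 0 < g ω := by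
  rw [ae_iff_measure_eq (measurableSet_lt measurable_const hmeas).nullMeasurableSet,
    measure_univ]
  simpa using hg 0 le_rfl

theorem measure_lt_le (hmeas : Measurable g) (hg : IsUnitExp g) {c : ℝ} (hc : 0 ≤ c) :
    ℙ {ω | g ω < c} ≤ ENNReal.ofReal c :=
  calc ℙ {ω | g ω < c} ≤ ℙ {ω | c < g ω}ᶜ := measure_mono fun _ (hω : _ < c) h => lt_asymm hω h
    _ = ENNReal.ofReal (1 - Real.exp (-c)) := by
      rw [prob_compl_eq_one_sub (measurableSet_lt measurable_const hmeas), hg c hc,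
        ENNReal.ofReal_sub _ (Real.exp_nonneg _), ENNReal.ofReal_one]
    _ ≤ ENNReal.ofReal c := ENNReal.ofReal_le_ofReal (by linarith [Real.add_one_le_exp (-c)])

end IsUnitExp

theorem lt_div_of_sum_mul_lt {ι : Type*} [Fintype ι] {a x : ι → ℝ} {θ : ℝ}
    (ha : ∀ i, 0 < a i) (hx : ∀ i, 0 ≤ x i) (h : ∑ i, a i * x i < θ) (i : ι) :
    x i < θ / a i :=
  (lt_div_iff₀' (ha i)).2 <|
    (Finset.single_le_sum (fun j _ => mul_nonneg (ha j).le (hx j)) (Finset.mem_univ i)).trans_lt h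

theorem measure_weighted_sum_lt_le {ι Ω : Type*} [Fintype ι] [MeasureSpace Ω]
    [IsProbabilityMeasure (ℙ : Measure Ω)] {X : ι → Ω → ℝ} {a : ι → ℝ}
    (hmeas : ∀ i, Measurable (X i)) (hindep : iIndepFun X ℙ) (hexp : ∀ i, IsUnitExp (X i))
    (ha : ∀ i, 0 < a i) {θ : ℝ} (hθ : 0 < θ) :
    ℙ {ω | ∑ i, a i * X i ω < θ} ≤ ENNReal.ofReal (θ ^ Fintype.card ι * ∏ i, (a i)⁻¹) := by
  have hpos : ∀ᵐ ω, ∀ i, 0 < X i ω := ae_all_iff.2 fun i => (hexp i).ae_pos (hmeas i)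
  calc ℙ {ω | ∑ i, a i * X i ω < θ} ≤ ℙ (⋂ i, X i ⁻¹' Set.Iio (θ / a i)) := by
        refine measure_mono_ae ?_
        filter_upwards [hpos] with ω hω hsum
        exact Set.mem_iInter.2 fun i => lt_div_of_sum_mul_lt ha (fun j => (hω j).le) hsum i
    _ = ∏ i, ℙ (X i ⁻¹' Set.Iio (θ / a i)) :=
        hindep.meas_iInter fun _ => ⟨_, measurableSet_Iio, rfl⟩
    _ ≤ ∏ i, ENNReal.ofReal (θ / a i) := Finset.prod_le_prod' fun i _ =>
        (hexp i).measure_lt_le (hmeas i) (div_pos hθ (ha i)).le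
    _ = ENNReal.ofReal (θ ^ Fintype.card ι * ∏ i, (a i)⁻¹) := by
        rw [← ENNReal.ofReal_prod_of_nonneg fun i _ => (div_pos hθ (ha i)).le]
        simp_rw [div_eq_mul_inv, Finset.prod_mul_distrib, Finset.prod_const, Finset.card_univ]

/-- for mutually independent unit-rate exponentials `G_k, H_k`
(`k = 1, …, n`) and `a_k, b_k > 0`, for every `θ > 0`,
`P[min(∑_k a_k G_k, ∑_k b_k H_k) < θ] ≤ θ^n (∏_k a_k⁻¹ + ∏_k b_k⁻¹)`. -/
theorem min_simo_miso_lower_tail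
    {Ω : Type*} [MeasureSpace Ω] [IsProbabilityMeasure (ℙ : Measure Ω)]
    (n : ℕ) (G H : Fin n → Ω → ℝ) (a b : Fin n → ℝ)
    (hGmeas : ∀ k, Measurable (G k)) (hHmeas : ∀ k, Measurable (H k))
    (hindep : iIndepFun (Sum.elim G H) ℙ)
    (hGexp : ∀ k, IsUnitExp (G k)) (hHexp : ∀ k, IsUnitExp (H k))
    (ha : ∀ k, 0 < a k) (hb : ∀ k, 0 < b k)
    (θ : ℝ) (hθ : 0 < θ) :
    ℙ {ω | min (∑ k, a k * G k ω) (∑ k, b k * H k ω) < θ}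
      ≤ ENNReal.ofReal (θ ^ n * ((∏ k, (a k)⁻¹) + ∏ k, (b k)⁻¹)) := by
  have hindepG : iIndepFun G ℙ := hindep.precomp (g := Sum.inl) Sum.inl_injective
  have hindepH : iIndepFun H ℙ := hindep.precomp (g := Sum.inr) Sum.inr_injective
  have hG := measure_weighted_sum_lt_le hGmeas hindepG hGexp ha hθ
  have hH := measure_weighted_sum_lt_le hHmeas hindepH hHexp hb hθ
  rw [Fintype.card_fin] at hG hH
  have hbound_nonneg {c : Fin n → ℝ} (hc : ∀ k, 0 < c k) : 0 ≤ θ ^ n * ∏ k, (c k)⁻¹ :=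
    mul_nonneg (pow_nonneg hθ.le n) (Finset.prod_nonneg fun k _ => (inv_pos.2 (hc k)).le)
  calc ℙ {ω | min (∑ k, a k * G k ω) (∑ k, b k * H k ω) < θ}
      = ℙ ({ω | ∑ k, a k * G k ω < θ} ∪ {ω | ∑ k, b k * H k ω < θ}) := by
        simp only [min_lt_iff, Set.ofPred_or]
    _ ≤ ℙ {ω | ∑ k, a k * G k ω < θ} + ℙ {ω | ∑ k, b k * H k ω < θ} := measure_union_le _ _
    _ ≤ ENNReal.ofReal (θ ^ n * ∏ k, (a k)⁻¹) + ENNReal.ofReal (θ ^ n * ∏ k, (b k)⁻¹) :=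
        add_le_add hG hH
    _ = ENNReal.ofReal (θ ^ n * ((∏ k, (a k)⁻¹) + ∏ k, (b k)⁻¹)) := by
        rw [mul_add, ENNReal.ofReal_add (hbound_nonneg ha) (hbound_nonneg hb)]
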